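/- arXiv:1501.05801 — 5 statements merged into one kernel-verified Lean document; each statement's English description precedes it below -/
import Mathlib

section
/- Let f : 2^N → ℝ be submodular with multilinear extension F, and fix u ∈ N. Then the function z ↦ ∂_u F(z · 𝟙_N) is non-increasing on [0,1], where z · 𝟙_N is the vector with all coordinates equal to z. -/
open Finset

noncomputable def bern {α : Type*} [DecidableEq α]
    (m : Finset α → ℝ) (T : Finset α) (z : ℝ) : ℝ :=
  ∑ S ∈ T.powerset, m S * (z ^ S.card * (1 - z) ^ (T.card - S.card))

lemma bern_insert {α : Type*} [DecidableEq α]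
    (m : Finset α → ℝ) {T : Finset α} {v : α} (hv : v ∉ T) (z : ℝ) :
    bern m (insert v T) z
      = (1 - z) * bern m T z + z * bern (fun S => m (insert v S)) T z := by
  have hdisj : Disjoint T.powerset (T.powerset.image (insert v)) := by
    rw [disjoint_left]
    intro S hS hS'
    rw [mem_powerset] at hS
    rw [mem_image] at hS'
    obtain ⟨S', _, rfl⟩ := hS'
    exact hv (hS (mem_insert_self v S'))
  have hinj : ∀ x ∈ T.powerset, ∀ y ∈ T.powerset,
      insert v x = insert v y → x = y := by
    intro S hS S' hS' h
    rw [mem_powerset] at hS hS'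
    have h1 : v ∉ S := fun hm => hv (hS hm)
    have h2 : v ∉ S' := fun hm => hv (hS' hm)
    rw [← erase_insert h1, ← erase_insert h2, h]
  unfold bern
  rw [powerset_insert, sum_union hdisj, sum_image hinj, mul_sum, mul_sum]
  congr 1
  · refine sum_congr rfl fun S hS => ?_
    rw [mem_powerset] at hS
    have h1 : S.card ≤ T.card := card_le_card hS
    rw [card_insert_of_notMem hv]
    have h2 : T.card + 1 - S.card = (T.card - S.card) + 1 := by omega
    rw [h2, pow_succ]
    ring
  · refine sum_congr rfl fun S hS => ?_
    rw [mem_powerset] at hS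
    have hvS : v ∉ S := fun h => hv (hS h)
    rw [card_insert_of_notMem hv, card_insert_of_notMem hvS]
    have h2 : T.card + 1 - (S.card + 1) = T.card - S.card := by omega
    rw [h2, pow_succ]
    ring

lemma bern_le {α : Type*} [DecidableEq α]
    (m m' : Finset α → ℝ) (T : Finset α)
    (h : ∀ S ∈ T.powerset, m' S ≤ m S) {z : ℝ} (h0 : 0 ≤ z) (h1 : z ≤ 1) :
    bern m' T z ≤ bern m T z := by
  refine sum_le_sum fun S hS => ?_
  have hz1 : (0:ℝ) ≤ 1 - z := by linarith
  have hw : (0:ℝ) ≤ z ^ S.card * (1 - z) ^ (T.card - S.card) := by positivity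
  exact mul_le_mul_of_nonneg_right (h S hS) hw

lemma bern_antitone {α : Type*} [DecidableEq α]
    (T : Finset α) (m : Finset α → ℝ)
    (h : ∀ S ⊆ T, ∀ v ∈ T, v ∉ S → m (insert v S) ≤ m S) :
    AntitoneOn (bern m T) (Set.Icc 0 1) := by
  induction T using Finset.induction_on generalizing m with
  | empty =>
    intro a _ b _ _
    unfold bern
    simp
  | @insert v T hv ih =>
    have hB := ih m (fun S hS w hw hwS => h S (hS.trans (subset_insert v T))
      w (mem_insert_of_mem hw) hwS)
    have hA := ih (fun S => m (insert v S)) ?_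
    · intro z1 hz1 z2 hz2 hle
      rw [bern_insert m hv, bern_insert m hv]
      obtain ⟨h10, h11⟩ := Set.mem_Icc.mp hz1
      obtain ⟨h20, h21⟩ := Set.mem_Icc.mp hz2
      have hB21 : bern m T z2 ≤ bern m T z1 := hB hz1 hz2 hle
      have hA21 : bern (fun S => m (insert v S)) T z2
          ≤ bern (fun S => m (insert v S)) T z1 := hA hz1 hz2 hle
      have hAB : bern (fun S => m (insert v S)) T z1 ≤ bern m T z1 := by
        refine bern_le _ _ _ (fun S hS => ?_) h10 h11
        rw [mem_powerset] at hS
        exact h S (hS.trans (subset_insert v T)) v (mem_insert_self v T)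
          (fun hm => hv (hS hm))
      nlinarith [mul_nonneg (sub_nonneg.mpr h21)
          (sub_nonneg.mpr hB21),
        mul_nonneg h20 (sub_nonneg.mpr hA21),
        mul_nonneg (sub_nonneg.mpr hle) (sub_nonneg.mpr hAB)]
    · intro S hS w hw hwS
      have hvS : v ∉ S := fun hm => hv (hS hm)
      have hwv : w ≠ v := fun hq => hv (hq ▸ hw)
      have := h (insert v S) (insert_subset_insert v hS)
        w (mem_insert_of_mem hw)
        (by simp [mem_insert, hwv, hwS])
      rwa [Finset.insert_comm] at this

/-- for a submodular `f` with multilinear extension `F` and `u ∈ N`,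
the function `z ↦ ∂_u F(z · 𝟙_N)` is non-increasing on `[0,1]`, where
`∂_u F(x) = F(x with coordinate u set to 1) - F(x with coordinate u set to 0)`. -/
theorem stmt_2 {α : Type*} [Fintype α] [DecidableEq α]
    (f : Finset α → ℝ)
    (hsub : ∀ A B : Finset α, f (A ∪ B) + f (A ∩ B) ≤ f A + f B)
    (F : (α → ℝ) → ℝ)
    (hF : ∀ y : α → ℝ,
      F y = ∑ S : Finset α, f S * ((∏ v ∈ S, y v) * ∏ v ∈ Sᶜ, (1 - y v)))
    (u : α) :
    AntitoneOn
      (fun z : ℝ =>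
        F (Function.update (fun _ : α => z) u 1) -
          F (Function.update (fun _ : α => z) u 0))
      (Set.Icc 0 1) := by
  classical
  set T : Finset α := Finset.univ.erase u with hT
  have huT : u ∉ T := Finset.notMem_erase u _
  have hcardT : T.card = Fintype.card α - 1 := by
    rw [hT, card_erase_of_mem (mem_univ u), card_univ]
  have key : ∀ z c : ℝ,
      F (Function.update (fun _ : α => z) u c)
        = (1 - c) * bern f T z + c * bern (fun S => f (insert u S)) T z := by
    intro z c
    rw [hF]
    set x : α → ℝ := Function.update (fun _ : α => z) u c with hx
    have hxu : x u = c := by simp [hx]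
    have hxv : ∀ v : α, v ≠ u → x v = z := fun v hv => by
      simp [hx, Function.update_apply, hv]
    have hSplit : (Finset.univ : Finset (Finset α)) = (insert u T).powerset := by
      rw [hT, Finset.insert_erase (mem_univ u), Finset.powerset_univ]
    have hdisj : Disjoint T.powerset (T.powerset.image (insert u)) := by
      rw [disjoint_left]
      intro S hS hS'
      rw [mem_powerset] at hS
      rw [mem_image] at hS'
      obtain ⟨S', _, rfl⟩ := hS'
      exact huT (hS (mem_insert_self u S'))
    have hinj : ∀ a ∈ T.powerset, ∀ b ∈ T.powerset,
        insert u a = insert u b → a = b := by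
      intro S hS S' hS' h
      rw [mem_powerset] at hS hS'
      have h1 : u ∉ S := fun hm => huT (hS hm)
      have h2 : u ∉ S' := fun hm => huT (hS' hm)
      rw [← erase_insert h1, ← erase_insert h2, h]
    rw [hSplit, powerset_insert, sum_union hdisj, sum_image hinj]
    congr 1
    · -- sums over S not containing u
      unfold bern
      rw [mul_sum]
      refine sum_congr rfl fun S hS => ?_
      rw [mem_powerset] at hS
      have huS : u ∉ S := fun hm => huT (hS hm)
      have hp1 : ∏ v ∈ S, x v = z ^ S.card := by
        rw [Finset.prod_congr rfl fun v hv =>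
          hxv v (fun hq => huS (hq ▸ hv)), prod_const]
      have huSc : u ∈ Sᶜ := Finset.mem_compl.mpr huS
      have hp2 : ∏ v ∈ Sᶜ, (1 - x v) = (1 - c) * (1 - z) ^ (T.card - S.card) := by
        rw [← Finset.mul_prod_erase _ _ huSc, hxu]
        congr 1
        rw [Finset.prod_congr rfl (fun v hv => ?_), prod_const]
        · congr 1
          rw [card_erase_of_mem huSc, Finset.card_compl]
          have : S.card ≤ T.card := card_le_card hS
          omega
        · rw [hxv v (Finset.ne_of_mem_erase hv)]
      rw [hp1, hp2]
      ring
    · -- sums over S containing u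
      unfold bern
      rw [mul_sum]
      refine sum_congr rfl fun S hS => ?_
      rw [mem_powerset] at hS
      have huS : u ∉ S := fun hm => huT (hS hm)
      have hp1 : ∏ v ∈ insert u S, x v = c * z ^ S.card := by
        rw [prod_insert huS, hxu]
        congr 1
        rw [Finset.prod_congr rfl fun v hv =>
          hxv v (fun hq => huS (hq ▸ hv)), prod_const]
      have hp2 : ∏ v ∈ (insert u S)ᶜ, (1 - x v)
          = (1 - z) ^ (T.card - S.card) := by
        rw [Finset.prod_congr rfl (fun v hv => ?_), prod_const]
        · congr 1
          rw [Finset.card_compl, card_insert_of_notMem huS]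
          have : S.card ≤ T.card := card_le_card hS
          omega
        · have : v ≠ u := fun hq =>
            (Finset.mem_compl.mp hv) (hq ▸ mem_insert_self u S)
          rw [hxv v this]
      rw [hp1, hp2]
      ring
  have hEq : ∀ z : ℝ,
      F (Function.update (fun _ : α => z) u 1) -
        F (Function.update (fun _ : α => z) u 0)
        = bern (fun S => f (insert u S) - f S) T z := by
    intro z
    rw [key z 1, key z 0]
    unfold bern
    simp only [sub_self, zero_mul, one_mul, sub_zero, zero_add, add_zero]
    rw [← Finset.sum_sub_distrib]
    exact sum_congr rfl fun S _ => by ring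
  intro a ha b hb hab
  simp only []
  rw [hEq a, hEq b]
  refine bern_antitone T (fun S => f (insert u S) - f S) ?_ ha hb hab
  intro S hS v hv hvS
  have huS : u ∉ S := fun hm => huT (hS hm)
  have hvu : v ≠ u := fun hq => huT (hq ▸ hv)
  have h1 : insert u S ∪ insert v S = insert u (insert v S) := by
    ext x
    simp only [mem_union, mem_insert]
    tauto
  have h2 : insert u S ∩ insert v S = S := by
    ext x
    simp only [mem_inter, mem_insert]
    constructor
    · rintro ⟨(rfl | h1), (h2 | h2)⟩
      · exact absurd h2 hvu.symm
      · exact h2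
      · exact h1
      · exact h1
    · intro h
      exact ⟨Or.inr h, Or.inr h⟩
  have := hsub (insert u S) (insert v S)
  rw [h1, h2] at this
  show f (insert u (insert v S)) - f (insert v S) ≤ f (insert u S) - f S
  linarith
end

section
/- Let f : 2^N → ℝ≥0 be a submodular function with multilinear extension F. Let x ∈ [0,1]^N satisfy x_u ≤ a for every u ∈ N, for some a ∈ [0,1]. Then for every set S ⊆ N, F(x ∨ 𝟙_S) ≥ (1 - a) · f(S), where x ∨ 𝟙_S is the coordinate-wise maximum of x and the characteristic vector of S. -/
open Finset MeasureTheory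

/-!
For submodular `f` the Lovász extension `∫₀¹ f {v | θ < y v} dθ` lies below the multilinear
extension `F y`. Both equal `f` at the vertices of the cube, and `F` is affine in each coordinate.
The Lovász extension lies below its chords in each coordinate: raising `y u` from `0` to `t`
replaces `f W` by `f (insert u W)` for `θ < t`, where `W` is the superlevel set without `u`, and
since `W` shrinks as `θ` grows, submodularity makes the marginal `f (insert u W) - f W` grow with
`θ`. Induction on the coordinates gives the comparison. For `y = x ∨ 𝟙_S` the superlevel set is
`S` whenever `a < θ < 1`, so with `f ≥ 0` the Lovász extension is at least `(1 - a) f S`.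
-/

theorem mul_integral_le_integral_of_antitoneOn {h : ℝ → ℝ} (hh : AntitoneOn h (Set.Icc 0 1))
    {c : ℝ} (hc : c ∈ Set.Icc (0 : ℝ) 1) :
    c * ∫ θ in (0 : ℝ)..1, h θ ≤ ∫ θ in (0 : ℝ)..c, h θ := by
  have hint : ∀ p ∈ Set.Icc (0 : ℝ) 1, ∀ q ∈ Set.Icc (0 : ℝ) 1, IntervalIntegrable h volume p q :=
    fun p hp q hq => (hh.mono (Set.uIcc_subset_Icc hp hq)).intervalIntegrable
  have h0 : (0 : ℝ) ∈ Set.Icc (0 : ℝ) 1 := ⟨le_rfl, zero_le_one⟩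
  have h1 : (1 : ℝ) ∈ Set.Icc (0 : ℝ) 1 := ⟨zero_le_one, le_rfl⟩
  have hhead : c * h c ≤ ∫ θ in (0 : ℝ)..c, h θ := by
    have := intervalIntegral.integral_mono_on hc.1 intervalIntegrable_const (hint 0 h0 c hc)
      fun θ hθ => hh ⟨hθ.1, hθ.2.trans hc.2⟩ hc hθ.2
    simpa using this
  have htail : ∫ θ in c..1, h θ ≤ (1 - c) * h c := by
    have := intervalIntegral.integral_mono_on hc.2 (hint c hc 1 h1) intervalIntegrable_const
      fun θ hθ => hh hc ⟨hc.1.trans hθ.1, hθ.2⟩ hθ.1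
    simpa using this
  rw [← intervalIntegral.integral_add_adjacent_intervals (hint 0 h0 c hc) (hint c hc 1 h1)]
  nlinarith [mul_le_mul_of_nonneg_left htail hc.1, mul_le_mul_of_nonneg_left hhead
    (sub_nonneg.mpr hc.2)]

section Submodularity

variable {α : Type*} [DecidableEq α]

def IsSubmodular (f : Finset α → ℝ) : Prop :=
  ∀ A B : Finset α, f (A ∪ B) + f (A ∩ B) ≤ f A + f B

theorem IsSubmodular.insert_sub_le_insert_sub {f : Finset α → ℝ} (hf : IsSubmodular f)
    {s t : Finset α} {u : α} (hst : s ⊆ t) (hut : u ∉ t) :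
    f (insert u t) - f t ≤ f (insert u s) - f s := by
  have h := hf (insert u s) t
  rw [insert_union, union_eq_right.mpr hst, insert_inter_of_notMem hut,
    inter_eq_left.mpr hst] at h
  linarith

end Submodularity

section LovaszExtension

variable {α : Type*} [Fintype α]

noncomputable def superlevel (y : α → ℝ) (θ : ℝ) : Finset α :=
  univ.filter (fun v => θ < y v)

noncomputable def lovaszExt (f : Finset α → ℝ) (y : α → ℝ) : ℝ :=
  ∫ θ in (0 : ℝ)..1, f (superlevel y θ)

theorem superlevel_antitone (y : α → ℝ) : Antitone (superlevel y) :=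
  fun _ _ h _ hv => by
    simp only [superlevel, mem_filter, mem_univ, true_and] at hv ⊢
    exact h.trans_lt hv

theorem measurableSet_superlevel_eq (y : α → ℝ) (T : Finset α) :
    MeasurableSet {θ | superlevel y θ = T} := by
  have : {θ | superlevel y θ = T} = ⋂ v, {θ | θ < y v ↔ v ∈ T} := by
    ext θ
    simp [superlevel, Finset.ext_iff]
  rw [this]
  refine MeasurableSet.iInter fun v => ?_
  by_cases hv : v ∈ T
  · simp only [hv, iff_true]
    exact measurableSet_Iio
  · simp only [hv, iff_false, not_lt]
    exact measurableSet_Ici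

theorem intervalIntegrable_comp_superlevel (φ : Finset α → ℝ) (y : α → ℝ) (p q : ℝ) :
    IntervalIntegrable (fun θ => φ (superlevel y θ)) volume p q := by
  have h : (fun θ => φ (superlevel y θ))
      = ∑ T : Finset α, {θ | superlevel y θ = T}.indicator (fun _ => φ T) := by
    funext θ
    rw [Finset.sum_apply, Finset.sum_eq_single_of_mem (superlevel y θ) (mem_univ _)]
    · exact (Set.indicator_of_mem rfl _).symm
    · exact fun T _ hT => Set.indicator_of_notMem (Ne.symm hT) _
  rw [h]
  refine IntervalIntegrable.sum _ fun T _ => ?_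
  exact intervalIntegrable_iff.mpr ((integrableOn_const measure_Ioc_lt_top.ne).indicator
    (measurableSet_superlevel_eq y T))

theorem mul_le_lovaszExt {f : Finset α → ℝ} (hf : ∀ S, 0 ≤ f S) {y : α → ℝ} {a : ℝ}
    (ha : a ∈ Set.Icc (0 : ℝ) 1) {S : Finset α} (hS : ∀ θ ∈ Set.Ioo a 1, superlevel y θ = S) :
    (1 - a) * f S ≤ lovaszExt f y := by
  have hhead : 0 ≤ ∫ θ in (0 : ℝ)..a, f (superlevel y θ) :=
    intervalIntegral.integral_nonneg ha.1 fun θ _ => hf _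
  rw [lovaszExt, ← intervalIntegral.integral_add_adjacent_intervals
      (intervalIntegrable_comp_superlevel f y 0 a) (intervalIntegrable_comp_superlevel f y a 1),
    intervalIntegral.integral_congr_Ioo_of_le ha.2 (g := fun _ => f S)
      fun θ hθ => congrArg f (hS θ hθ),
    intervalIntegral.integral_const, smul_eq_mul]
  linarith

end LovaszExtension

section Comparison

variable {α : Type*} [Fintype α] [DecidableEq α]

noncomputable def multilinearExt (f : Finset α → ℝ) (y : α → ℝ) : ℝ :=
  ∑ T : Finset α, f T * ((∏ v ∈ T, y v) * ∏ v ∈ Tᶜ, (1 - y v))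

theorem multilinearExt_eq_sum_prod (f : Finset α → ℝ) (y : α → ℝ) :
    multilinearExt f y = ∑ T : Finset α, f T * ∏ v, if v ∈ T then y v else 1 - y v := by
  refine sum_congr rfl fun T _ => ?_
  rw [← prod_mul_prod_compl T]
  congr 2
  · exact prod_congr rfl fun v hv => (if_pos hv).symm
  · exact prod_congr rfl fun v hv => (if_neg (mem_compl.mp hv)).symm

theorem multilinearExt_update (f : Finset α → ℝ) (y : α → ℝ) (u : α) (t : ℝ) :
    multilinearExt f (Function.update y u t)
      = (1 - t) * multilinearExt f (Function.update y u 0)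
        + t * multilinearExt f (Function.update y u 1) := by
  simp only [multilinearExt_eq_sum_prod, mul_sum, ← sum_add_distrib]
  refine sum_congr rfl fun T _ => ?_
  have hsplit : ∀ t : ℝ, (∏ v, if v ∈ T then Function.update y u t v
        else 1 - Function.update y u t v)
      = (if u ∈ T then t else 1 - t) * ∏ v ∈ univ.erase u, if v ∈ T then y v else 1 - y v := by
    intro t
    rw [← mul_prod_erase univ _ (mem_univ u), Function.update_self]
    congr 1
    refine prod_congr rfl fun v hv => ?_
    rw [Function.update_of_ne (ne_of_mem_erase hv)]
  rw [hsplit, hsplit, hsplit]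
  split_ifs <;> ring

theorem multilinearExt_indicator (f : Finset α → ℝ) (R : Finset α) :
    multilinearExt f (fun v => if v ∈ R then 1 else 0) = f R := by
  have hprod : ∀ T : Finset α,
      (∏ v, if v ∈ T then (if v ∈ R then 1 else 0) else 1 - (if v ∈ R then 1 else 0))
        = if T = R then (1 : ℝ) else 0 := by
    intro T
    calc _ = ∏ v, if (v ∈ T ↔ v ∈ R) then (1 : ℝ) else 0 := by
          refine prod_congr rfl fun v _ => ?_
          by_cases hT : v ∈ T <;> by_cases hR : v ∈ R <;> simp [hT, hR]
      _ = if T = R then 1 else 0 := by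
          simp only [prod_boole, mem_univ, true_implies, ← Finset.ext_iff]
  simp [multilinearExt_eq_sum_prod, hprod]

theorem superlevel_indicator {R : Finset α} {θ : ℝ} (hθ : θ ∈ Set.Ioo (0 : ℝ) 1) :
    superlevel (fun v => if v ∈ R then 1 else 0) θ = R := by
  ext v
  by_cases hv : v ∈ R <;> simp [superlevel, hv, hθ.1.not_gt, hθ.2]

theorem lovaszExt_indicator (f : Finset α → ℝ) (R : Finset α) :
    lovaszExt f (fun v => if v ∈ R then 1 else 0) = f R := by
  rw [lovaszExt, intervalIntegral.integral_congr_Ioo_of_le zero_le_one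
    (g := fun _ => f R) fun θ hθ => congrArg f (superlevel_indicator hθ)]
  simp

theorem superlevel_update (y : α → ℝ) (u : α) (t θ : ℝ) :
    superlevel (Function.update y u t) θ
      = if θ < t then insert u ((superlevel y θ).erase u) else (superlevel y θ).erase u := by
  ext v
  by_cases hv : v = u
  · subst hv
    split_ifs with h <;> simp [superlevel, h]
  · split_ifs <;> simp [superlevel, hv]

theorem IsSubmodular.lovaszExt_update_le {f : Finset α → ℝ} (hf : IsSubmodular f)
    (y : α → ℝ) (u : α) {t : ℝ} (ht : t ∈ Set.Icc (0 : ℝ) 1) :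
    lovaszExt f (Function.update y u t)
      ≤ (1 - t) * lovaszExt f (Function.update y u 0)
        + t * lovaszExt f (Function.update y u 1) := by
  set g₀ : ℝ → ℝ := fun θ => f ((superlevel y θ).erase u)
  set g₁ : ℝ → ℝ := fun θ => f (insert u ((superlevel y θ).erase u))
  have hg₀ : ∀ p q, IntervalIntegrable g₀ volume p q :=
    intervalIntegrable_comp_superlevel (fun T => f (T.erase u)) y
  have hg₁ : ∀ p q, IntervalIntegrable g₁ volume p q :=
    intervalIntegrable_comp_superlevel (fun T => f (insert u (T.erase u))) y
  have hL₀ : lovaszExt f (Function.update y u 0) = ∫ θ in (0 : ℝ)..1, g₀ θ :=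
    intervalIntegral.integral_congr_Ioo_of_le zero_le_one fun θ hθ => by
      simp [superlevel_update, g₀, hθ.1.not_gt]
  have hL₁ : lovaszExt f (Function.update y u 1) = ∫ θ in (0 : ℝ)..1, g₁ θ :=
    intervalIntegral.integral_congr_Ioo_of_le zero_le_one fun θ hθ => by
      simp [superlevel_update, g₁, hθ.2]
  have hLt : lovaszExt f (Function.update y u t)
      = (∫ θ in (0 : ℝ)..t, g₁ θ) + ∫ θ in t..1, g₀ θ := by
    rw [lovaszExt, ← intervalIntegral.integral_add_adjacent_intervals
      (intervalIntegrable_comp_superlevel f _ 0 t) (intervalIntegrable_comp_superlevel f _ t 1)]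
    congr 1
    · exact intervalIntegral.integral_congr_Ioo_of_le ht.1 fun θ hθ => by
        simp [superlevel_update, g₁, hθ.2]
    · exact intervalIntegral.integral_congr_Ioo_of_le ht.2 fun θ hθ => by
        simp [superlevel_update, g₀, hθ.1.not_gt]
  have hanti : Antitone fun θ => g₀ θ - g₁ θ := fun θ₁ θ₂ h => by
    have hmarginal := hf.insert_sub_le_insert_sub
      (erase_subset_erase u (superlevel_antitone y h)) (notMem_erase u (superlevel y θ₁))
    simp only [g₀, g₁]
    linarith
  have havg := mul_integral_le_integral_of_antitoneOn (hanti.antitoneOn _) ht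
  rw [intervalIntegral.integral_sub (hg₀ 0 1) (hg₁ 0 1),
    intervalIntegral.integral_sub (hg₀ 0 t) (hg₁ 0 t),
    ← intervalIntegral.integral_add_adjacent_intervals (hg₀ 0 t) (hg₀ t 1)] at havg
  rw [hL₀, hL₁, hLt, ← intervalIntegral.integral_add_adjacent_intervals (hg₀ 0 t) (hg₀ t 1)]
  linarith

theorem IsSubmodular.lovaszExt_le_multilinearExt {f : Finset α → ℝ} (hf : IsSubmodular f)
    {y : α → ℝ} (hy : ∀ v, y v ∈ Set.Icc (0 : ℝ) 1) :
    lovaszExt f y ≤ multilinearExt f y := by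
  suffices H : ∀ s : Finset α, ∀ y : α → ℝ, (∀ v, y v ∈ Set.Icc (0 : ℝ) 1) →
      (∀ v ∉ s, y v = 0 ∨ y v = 1) → lovaszExt f y ≤ multilinearExt f y from
    H univ y hy fun v hv => absurd (mem_univ v) hv
  intro s
  induction s using Finset.induction_on with
  | empty =>
    intro y _ hbool
    have hy : y = fun v => if v ∈ univ.filter (y · = 1) then 1 else 0 := funext fun v => by
      rcases hbool v (notMem_empty v) with h | h <;> simp [h]
    rw [hy, lovaszExt_indicator, multilinearExt_indicator]
  | insert u s _ ih =>
    intro y hy hbool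
    have hupd : ∀ t : ℝ, (t = 0 ∨ t = 1) →
        lovaszExt f (Function.update y u t) ≤ multilinearExt f (Function.update y u t) := by
      intro t ht
      refine ih _ (fun v => ?_) (fun v hv => ?_)
      · rcases eq_or_ne v u with rfl | hvu
        · rcases ht with rfl | rfl <;> simp
        · simpa [Function.update_of_ne hvu] using hy v
      · rcases eq_or_ne v u with rfl | hvu
        · simpa using ht
        · simpa [Function.update_of_ne hvu] using hbool v (by simp [hvu, hv])
    rw [← Function.update_eq_self u y]
    calc lovaszExt f (Function.update y u (y u))
        ≤ (1 - y u) * lovaszExt f (Function.update y u 0)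
          + y u * lovaszExt f (Function.update y u 1) := hf.lovaszExt_update_le y u (hy u)
      _ ≤ (1 - y u) * multilinearExt f (Function.update y u 0)
          + y u * multilinearExt f (Function.update y u 1) := by
        have hyu₀ := (hy u).1
        have hyu₁ := sub_nonneg.mpr (hy u).2
        gcongr
        · exact hupd 0 (Or.inl rfl)
        · exact hupd 1 (Or.inr rfl)
      _ = multilinearExt f (Function.update y u (y u)) := (multilinearExt_update f y u _).symm

end Comparison

/-- if `f` is non-negative submodular with multilinear extension `F`,
`x ∈ [0,1]^N` has all coordinates at most `a`, then for every `S ⊆ N`,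
`F(x ∨ 𝟙_S) ≥ (1 - a) · f(S)`. -/
theorem stmt_3 {α : Type*} [Fintype α] [DecidableEq α]
    (f : Finset α → ℝ)
    (hnn : ∀ S : Finset α, 0 ≤ f S)
    (hsub : ∀ A B : Finset α, f (A ∪ B) + f (A ∩ B) ≤ f A + f B)
    (F : (α → ℝ) → ℝ)
    (hF : ∀ y : α → ℝ,
      F y = ∑ T : Finset α, f T * ((∏ v ∈ T, y v) * ∏ v ∈ Tᶜ, (1 - y v)))
    (a : ℝ) (ha : a ∈ Set.Icc (0:ℝ) 1)
    (x : α → ℝ) (hx : ∀ v, x v ∈ Set.Icc (0:ℝ) 1) (hxa : ∀ v, x v ≤ a)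
    (S : Finset α) :
    F (fun v => max (x v) (if v ∈ S then 1 else 0)) ≥ (1 - a) * f S := by
  set y : α → ℝ := fun v => max (x v) (if v ∈ S then 1 else 0)
  have hy : ∀ v, y v ∈ Set.Icc (0 : ℝ) 1 := fun v =>
    ⟨le_max_of_le_left (hx v).1, max_le (hx v).2 (by split_ifs <;> norm_num)⟩
  have hlevel : ∀ θ ∈ Set.Ioo a 1, superlevel y θ = S := fun θ hθ => by
    ext v
    by_cases hv : v ∈ S
    · simp [superlevel, y, hv, hθ.2]
    · simp [superlevel, y, hv, ((hxa v).trans hθ.1.le).not_gt, ha.1.trans hθ.1.le]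
  calc (1 - a) * f S ≤ lovaszExt f y := mul_le_lovaszExt hnn ha hlevel
    _ ≤ multilinearExt f y := IsSubmodular.lovaszExt_le_multilinearExt hsub hy
    _ = F y := (hF y).symm
end

section
/- Let f : 2^N → ℝ≥0 be submodular, k ≥ 1, let S be a set with |S| = k, and let u ∉ S. Let u' ∈ S maximize f(S + u - u'). Then f(S + u - u') - f(S) ≥ f(S + u) - f(S) + (f(∅) - f(S))/k ≥ (f(S+u) - f(S)) - f(S)/k. -/
lemma stmt7_aux {α : Type*} [DecidableEq α] (f : Finset α → ℝ)
    (hsub : ∀ A B : Finset α, f (A ∪ B) + f (A ∩ B) ≤ f A + f B)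
    (T : Finset α) (A : Finset α) :
    f (T \ A) + ∑ v ∈ A, (f T - f (T.erase v)) ≤ f T := by
  induction A using Finset.induction with
  | empty => simp
  | @insert a A' ha ih =>
    rw [Finset.sum_insert ha]
    have key := hsub (T \ A') (T.erase a)
    have h1 : (T \ A') ∪ T.erase a = T := by
      rw [Finset.erase_eq]
      ext x; by_cases hx : x = a <;> simp [hx, ha] <;> tauto
    have h2 : (T \ A') ∩ T.erase a = T \ insert a A' := by
      rw [Finset.erase_eq]
      ext x; by_cases hx : x = a <;> simp [hx] <;> tauto
    rw [h1, h2] at key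
    linarith

/-- for non-negative submodular `f`, `|S| = k ≥ 1`, `u ∉ S`, and `u' ∈ S`
maximizing `f(S + u - u')`, one has
`f(S + u - u') - f(S) ≥ f(S + u) - f(S) + (f(∅) - f(S))/k ≥ (f(S + u) - f(S)) - f(S)/k`. -/
theorem stmt_7 {α : Type*} [Fintype α] [DecidableEq α]
    (f : Finset α → ℝ)
    (hnn : ∀ S : Finset α, 0 ≤ f S)
    (hsub : ∀ A B : Finset α, f (A ∪ B) + f (A ∩ B) ≤ f A + f B)
    (k : ℕ) (hk : 1 ≤ k) (S : Finset α) (hS : S.card = k)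
    (u : α) (hu : u ∉ S)
    (u' : α) (hu' : u' ∈ S)
    (hmax : ∀ v ∈ S, f ((insert u S).erase v) ≤ f ((insert u S).erase u')) :
    f ((insert u S).erase u') - f S ≥
        f (insert u S) - f S + (f ∅ - f S) / k ∧
      f (insert u S) - f S + (f ∅ - f S) / k ≥
        (f (insert u S) - f S) - f S / k := by
  set T := insert u S with hT
  have hkpos : (0:ℝ) < (k:ℝ) := by positivity
  have haux := stmt7_aux f hsub T S
  have hTS : T \ S = {u} := by
    ext x
    simp only [hT, Finset.mem_sdiff, Finset.mem_insert, Finset.mem_singleton]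
    constructor
    · rintro ⟨h | h, h2⟩ <;> tauto
    · rintro rfl; exact ⟨Or.inl rfl, hu⟩
  rw [hTS, Finset.sum_sub_distrib, Finset.sum_const, hS, nsmul_eq_mul] at haux
  have hsum : ∑ v ∈ S, f (T.erase v) ≤ (k:ℝ) * f (T.erase u') := by
    calc ∑ v ∈ S, f (T.erase v) ≤ ∑ _v ∈ S, f (T.erase u') :=
          Finset.sum_le_sum fun v hv => hmax v hv
      _ = (k:ℝ) * f (T.erase u') := by rw [Finset.sum_const, hS, nsmul_eq_mul]
  have h3 : f T + f ∅ ≤ f {u} + f S := by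
    have h := hsub {u} S
    have e1 : ({u} : Finset α) ∪ S = T := by rw [hT, Finset.insert_eq]
    have e2 : ({u} : Finset α) ∩ S = ∅ := by
      simp [Finset.singleton_inter_of_notMem hu]
    rwa [e1, e2] at h
  constructor
  · have hd : (f ∅ - f S) / k * k = f ∅ - f S := div_mul_cancel₀ _ hkpos.ne'
    rw [ge_iff_le, ← sub_nonneg]
    have hkey : 0 ≤ (f (T.erase u') - f S - (f T - f S + (f ∅ - f S) / k)) * k := by
      nlinarith
    nlinarith
  · have h0 : 0 ≤ f ∅ / k := div_nonneg (hnn ∅) hkpos.le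
    rw [sub_div]
    linarith
end

section
/- Let f : 2^N → ℝ≥0 be monotone and submodular, let OPT, A ⊆ N, and let S ⊆ A with f(S) ≥ (c/(c+1))·f(A) for some c > 0. Suppose furthermore that every u ∈ OPT \ A satisfies f(u | A) < ((c+1)/k)·f(S) and that |OPT| ≤ k. Then f(OPT) ≤ ((c+1)²/c)·f(S). -/
lemma marg_mono {α : Type*} [DecidableEq α] (f : Finset α → ℝ)
    (hmono : ∀ A B : Finset α, A ⊆ B → f A ≤ f B)
    (hsub : ∀ A B : Finset α, f (A ∪ B) + f (A ∩ B) ≤ f A + f B)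
    (A B : Finset α) (hAB : A ⊆ B) (v : α) :
    f (insert v B) - f B ≤ f (insert v A) - f A := by
  have h := hsub (insert v A) B
  have hu : insert v A ∪ B = insert v B := by
    rw [Finset.insert_union, Finset.union_eq_right.mpr hAB]
  have hi : A ⊆ insert v A ∩ B := by
    intro x hx; simp [Finset.mem_inter, Finset.mem_insert, hx, hAB hx]
  have := hmono _ _ hi
  rw [hu] at h
  linarith

lemma sum_marg {α : Type*} [DecidableEq α] (f : Finset α → ℝ)
    (hmono : ∀ A B : Finset α, A ⊆ B → f A ≤ f B)
    (hsub : ∀ A B : Finset α, f (A ∪ B) + f (A ∩ B) ≤ f A + f B)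
    (A : Finset α) (T : Finset α) :
    f (A ∪ T) ≤ f A + ∑ u ∈ T, (f (insert u A) - f A) := by
  induction T using Finset.induction_on with
  | empty => simp
  | @insert v T' hv ih =>
    have h1 : A ∪ insert v T' = insert v (A ∪ T') := Finset.union_insert ..
    have h2 := marg_mono f hmono hsub A (A ∪ T') Finset.subset_union_left v
    rw [h1, Finset.sum_insert hv]
    linarith

/-- for a non-negative monotone submodular `f`, if `S ⊆ A` with
`f(S) ≥ (c/(c+1))·f(A)`, every `u ∈ OPT \ A` has `f(u | A) < ((c+1)/k)·f(S)`, and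
`|OPT| ≤ k`, then `f(OPT) ≤ ((c+1)²/c)·f(S)`. -/
theorem stmt_10 {α : Type*} [Fintype α] [DecidableEq α]
    (f : Finset α → ℝ)
    (hnn : ∀ S : Finset α, 0 ≤ f S)
    (hmono : ∀ A B : Finset α, A ⊆ B → f A ≤ f B)
    (hsub : ∀ A B : Finset α, f (A ∪ B) + f (A ∩ B) ≤ f A + f B)
    (k : ℕ) (hk : 1 ≤ k) (c : ℝ) (hc : 0 < c)
    (OPT A S : Finset α) (hSA : S ⊆ A)
    (hfS : f S ≥ (c / (c + 1)) * f A)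
    (hmarg : ∀ u ∈ OPT \ A, f (insert u A) - f A < ((c + 1) / k) * f S)
    (hOPT : OPT.card ≤ k) :
    f OPT ≤ ((c + 1) ^ 2 / c) * f S := by
  have hk' : (0:ℝ) < k := by exact_mod_cast hk
  have hbnd : (0:ℝ) ≤ ((c + 1) / k) * f S :=
    mul_nonneg (div_nonneg (by linarith) hk'.le) (hnn S)
  have h1 : f OPT ≤ f (A ∪ (OPT \ A)) := by
    apply hmono
    rw [Finset.union_sdiff_self_eq_union]
    exact Finset.subset_union_right
  have h2 := sum_marg f hmono hsub A (OPT \ A)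
  have h3 : ∑ u ∈ OPT \ A, (f (insert u A) - f A)
      ≤ (OPT \ A).card * (((c + 1) / k) * f S) := by
    simpa [nsmul_eq_mul] using
      Finset.sum_le_card_nsmul _ _ _ (fun u hu => (hmarg u hu).le)
  have hcard : ((OPT \ A).card : ℝ) ≤ k := by
    have : (OPT \ A).card ≤ OPT.card := Finset.card_le_card (Finset.sdiff_subset)
    exact_mod_cast this.trans hOPT
  have h4 : ((OPT \ A).card : ℝ) * (((c + 1) / k) * f S) ≤ k * (((c + 1) / k) * f S) :=
    mul_le_mul_of_nonneg_right hcard hbnd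
  have h5 : (k:ℝ) * (((c + 1) / k) * f S) = (c + 1) * f S := by
    field_simp
  have hfA : c * f A ≤ (c + 1) * f S := by
    rw [ge_iff_le, div_mul_eq_mul_div, div_le_iff₀ (by linarith : (0:ℝ) < c + 1)] at hfS
    linarith
  have : f OPT ≤ f A + (c + 1) * f S := by
    rw [← h5]
    calc f OPT ≤ f (A ∪ (OPT \ A)) := h1
    _ ≤ f A + ∑ u ∈ OPT \ A, (f (insert u A) - f A) := h2
    _ ≤ f A + (k:ℝ) * (((c + 1) / k) * f S) := by push_cast at h3 ⊢; linarith
  rw [div_mul_eq_mul_div, le_div_iff₀ hc]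
  nlinarith [hnn S]
end

section
/- Let f : 2^N → ℝ be submodular, let R ⊆ N with |R| = p' ≤ p for an integer p ≥ 1, let D be a random subset of N \ R (arbitrary distribution), let R̄ be a uniformly random subset of R of size at most 1 chosen by including each fixed element of R with probability 1/p (so R̄ is a single uniformly random element of R with probability p'/p and empty otherwise), and let R(1/p) be a subset of R including each element independently with probability 1/p, independent of D. Then E[f(D ∪ R̄)] ≥ E[f(D ∪ R(1/p))]. -/
section aux

variable {α : Type*} [DecidableEq α]

lemma marg_bound (f : Finset α → ℝ)
    (hsub : ∀ A B : Finset α, f (A ∪ B) + f (A ∩ B) ≤ f A + f B)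
    (T : Finset α) :
    ∀ U : Finset α, (∀ v ∈ U, v ∉ T) →
      f (T ∪ U) ≤ f T + ∑ v ∈ U, (f (insert v T) - f T) := by
  intro U
  induction U using Finset.induction_on with
  | empty => intro _; simp
  | @insert a U ha ih =>
    intro h
    have haT : a ∉ T := h a (Finset.mem_insert_self a U)
    have hUT : ∀ v ∈ U, v ∉ T := fun v hv => h v (Finset.mem_insert_of_mem hv)
    have h1 : (T ∪ U) ∪ insert a T = T ∪ insert a U := by
      ext x; simp [Finset.mem_union, Finset.mem_insert]; tauto
    have h2 : (T ∪ U) ∩ insert a T = T := by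
      ext x
      simp only [Finset.mem_inter, Finset.mem_union, Finset.mem_insert]
      constructor
      · rintro ⟨hx1, hx2⟩
        rcases hx2 with rfl | hx2
        · rcases hx1 with hx1 | hx1
          · exact hx1
          · exact absurd hx1 ha
        · exact hx2
      · intro hx; exact ⟨Or.inl hx, Or.inr hx⟩
    have := hsub (T ∪ U) (insert a T)
    rw [h1, h2] at this
    have hih := ih hUT
    rw [Finset.sum_insert ha]
    linarith

lemma disj_pow (a : α) (s : Finset α) (ha : a ∉ s) :
    Disjoint s.powerset (s.powerset.image (insert a)) := by
  rw [Finset.disjoint_left]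
  intro U hU hU'
  obtain ⟨V, _, rfl⟩ := Finset.mem_image.mp hU'
  exact ha (Finset.mem_powerset.mp hU (Finset.mem_insert_self a V))

lemma inj_insert (a : α) (s : Finset α) (ha : a ∉ s) :
    ∀ x ∈ s.powerset, ∀ y ∈ s.powerset, insert a x = insert a y → x = y := by
  intro x hx y hy hxy
  have hax : a ∉ x := fun hax => ha (Finset.mem_powerset.mp hx hax)
  have hay : a ∉ y := fun hay => ha (Finset.mem_powerset.mp hy hay)
  rw [← Finset.erase_insert hax, hxy, Finset.erase_insert hay]

lemma sum_one (q : ℝ) :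
    ∀ s : Finset α, ∑ U ∈ s.powerset, q ^ U.card * (1 - q) ^ (s.card - U.card) = 1 := by
  intro s
  induction s using Finset.induction_on with
  | empty => simp
  | @insert a s ha ih =>
    rw [Finset.powerset_insert, Finset.sum_union (disj_pow a s ha),
      Finset.sum_image (inj_insert a s ha), Finset.card_insert_of_notMem ha]
    have e1 : ∀ U ∈ s.powerset,
        q ^ U.card * (1 - q) ^ (s.card + 1 - U.card)
          = (1 - q) * (q ^ U.card * (1 - q) ^ (s.card - U.card)) := by
      intro U hU
      have hle : U.card ≤ s.card := Finset.card_le_card (Finset.mem_powerset.mp hU)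
      rw [show s.card + 1 - U.card = (s.card - U.card) + 1 by omega, pow_succ]
      ring
    have e2 : ∀ U ∈ s.powerset,
        q ^ (insert a U).card * (1 - q) ^ (s.card + 1 - (insert a U).card)
          = q * (q ^ U.card * (1 - q) ^ (s.card - U.card)) := by
      intro U hU
      have haU : a ∉ U := fun h => ha (Finset.mem_powerset.mp hU h)
      rw [Finset.card_insert_of_notMem haU,
        show s.card + 1 - (U.card + 1) = s.card - U.card by omega, pow_succ]
      ring
    rw [Finset.sum_congr rfl e1, Finset.sum_congr rfl e2, ← Finset.mul_sum,
      ← Finset.mul_sum, ih]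
    ring

lemma sum_ind (q : ℝ) (s : Finset α) (v : α) (hv : v ∈ s) :
    ∑ U ∈ s.powerset, q ^ U.card * (1 - q) ^ (s.card - U.card) *
      (if v ∈ U then (1 : ℝ) else 0) = q := by
  have hvs : v ∉ s.erase v := Finset.notMem_erase v s
  conv_lhs => rw [← Finset.insert_erase hv]
  rw [Finset.powerset_insert, Finset.sum_union (disj_pow v _ hvs),
    Finset.sum_image (inj_insert v _ hvs), Finset.card_insert_of_notMem hvs]
  have e1 : ∀ U ∈ (s.erase v).powerset,
      q ^ U.card * (1 - q) ^ ((s.erase v).card + 1 - U.card) *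
        (if v ∈ U then (1 : ℝ) else 0) = 0 := by
    intro U hU
    have : v ∉ U := fun h => hvs (Finset.mem_powerset.mp hU h)
    simp [this]
  have e2 : ∀ U ∈ (s.erase v).powerset,
      q ^ (insert v U).card * (1 - q) ^ ((s.erase v).card + 1 - (insert v U).card) *
        (if v ∈ insert v U then (1 : ℝ) else 0)
        = q * (q ^ U.card * (1 - q) ^ ((s.erase v).card - U.card)) := by
    intro U hU
    have hvU : v ∉ U := fun h => hvs (Finset.mem_powerset.mp hU h)
    rw [Finset.card_insert_of_notMem hvU,
      show (s.erase v).card + 1 - (U.card + 1) = (s.erase v).card - U.card by omega,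
      if_pos (Finset.mem_insert_self v U), pow_succ]
    ring
  rw [Finset.sum_congr rfl e1, Finset.sum_congr rfl e2, Finset.sum_const_zero,
    ← Finset.mul_sum, sum_one q (s.erase v)]
  ring

lemma per_T (f : Finset α → ℝ)
    (hsub : ∀ A B : Finset α, f (A ∪ B) + f (A ∩ B) ≤ f A + f B)
    (q : ℝ) (hq0 : 0 ≤ q) (hq1 : q ≤ 1) (R T : Finset α)
    (hTR : ∀ v ∈ R, v ∉ T) :
    ∑ U ∈ R.powerset, q ^ U.card * (1 - q) ^ (R.card - U.card) * f (T ∪ U)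
      ≤ (1 - R.card * q) * f T + ∑ v ∈ R, q * f (insert v T) := by
  have hwpos : ∀ U : Finset α, 0 ≤ q ^ U.card * (1 - q) ^ (R.card - U.card) :=
    fun U => mul_nonneg (pow_nonneg hq0 _) (pow_nonneg (by linarith) _)
  have step1 : ∑ U ∈ R.powerset, q ^ U.card * (1 - q) ^ (R.card - U.card) * f (T ∪ U)
      ≤ ∑ U ∈ R.powerset, q ^ U.card * (1 - q) ^ (R.card - U.card) *
        (f T + ∑ v ∈ R, (if v ∈ U then (1 : ℝ) else 0) * (f (insert v T) - f T)) := by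
    apply Finset.sum_le_sum
    intro U hU
    apply mul_le_mul_of_nonneg_left _ (hwpos U)
    have hUsub : U ⊆ R := Finset.mem_powerset.mp hU
    have := marg_bound f hsub T U (fun v hv => hTR v (hUsub hv))
    calc f (T ∪ U) ≤ f T + ∑ v ∈ U, (f (insert v T) - f T) := this
      _ = f T + ∑ v ∈ R, (if v ∈ U then (1 : ℝ) else 0) * (f (insert v T) - f T) := by
          congr 1
          simp only [ite_mul, one_mul, zero_mul]
          rw [Finset.sum_ite_mem, Finset.inter_eq_right.mpr hUsub]
  calc ∑ U ∈ R.powerset, q ^ U.card * (1 - q) ^ (R.card - U.card) * f (T ∪ U)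
      ≤ ∑ U ∈ R.powerset, q ^ U.card * (1 - q) ^ (R.card - U.card) *
        (f T + ∑ v ∈ R, (if v ∈ U then (1 : ℝ) else 0) * (f (insert v T) - f T)) := step1
    _ = (∑ U ∈ R.powerset, q ^ U.card * (1 - q) ^ (R.card - U.card)) * f T +
        ∑ v ∈ R, (∑ U ∈ R.powerset, q ^ U.card * (1 - q) ^ (R.card - U.card) *
          (if v ∈ U then (1 : ℝ) else 0)) * (f (insert v T) - f T) := by
        simp only [mul_add, Finset.sum_add_distrib]
        congr 1
        · rw [Finset.sum_mul]
        · simp only [Finset.mul_sum, Finset.sum_mul]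
          rw [Finset.sum_comm]
          simp only [mul_assoc]
    _ = f T + ∑ v ∈ R, q * (f (insert v T) - f T) := by
        rw [sum_one q R, one_mul]
        congr 1
        apply Finset.sum_congr rfl
        intro v hv
        rw [sum_ind q R v hv]
    _ = (1 - R.card * q) * f T + ∑ v ∈ R, q * f (insert v T) := by
        simp only [mul_sub, Finset.sum_sub_distrib, Finset.sum_const, nsmul_eq_mul]
        ring
end aux

/-- for a submodular `f`, a set `R` with `|R| ≤ p`, and a random set `D`
over subsets of `N \ R` (with arbitrary distribution `w`), choosing a single element of
`R` with probability `1/p` each (and nothing otherwise) gives at least as much expected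
value as including each element of `R` independently with probability `1/p`:
`E[f(D ∪ R̄)] ≥ E[f(D ∪ R(1/p))]`.  Expectations are written out as explicit sums. -/
theorem stmt_12 {α : Type*} [Fintype α] [DecidableEq α]
    (f : Finset α → ℝ)
    (hsub : ∀ A B : Finset α, f (A ∪ B) + f (A ∩ B) ≤ f A + f B)
    (p : ℕ) (hp : 1 ≤ p) (R : Finset α) (hR : R.card ≤ p)
    (w : Finset α → ℝ)
    (hw0 : ∀ T, 0 ≤ w T)
    (hw1 : ∑ T ∈ (Finset.univ \ R).powerset, w T = 1) :
    ∑ T ∈ (Finset.univ \ R).powerset, w T *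
        ((1 - (R.card : ℝ) / p) * f T + ∑ v ∈ R, (1 / (p : ℝ)) * f (insert v T)) ≥
      ∑ T ∈ (Finset.univ \ R).powerset, w T *
        ∑ U ∈ R.powerset,
          (1 / (p : ℝ)) ^ U.card * (1 - 1 / (p : ℝ)) ^ (R.card - U.card) *
            f (T ∪ U) := by
  have hp' : (1 : ℝ) ≤ (p : ℝ) := by exact_mod_cast hp
  have hppos : (0 : ℝ) < p := by linarith
  have hq0 : (0 : ℝ) ≤ 1 / p := by positivity
  have hq1 : (1 : ℝ) / p ≤ 1 := by
    rw [div_le_one hppos]; exact hp'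
  apply Finset.sum_le_sum
  intro T hT
  apply mul_le_mul_of_nonneg_left _ (hw0 T)
  have hTR : ∀ v ∈ R, v ∉ T := by
    intro v hv hvT
    have := Finset.mem_powerset.mp hT hvT
    simp [Finset.mem_sdiff] at this
    exact this hv
  have := per_T f hsub (1 / p) hq0 hq1 R T hTR
  calc ∑ U ∈ R.powerset,
        (1 / (p : ℝ)) ^ U.card * (1 - 1 / (p : ℝ)) ^ (R.card - U.card) * f (T ∪ U)
      ≤ (1 - R.card * (1 / p)) * f T + ∑ v ∈ R, (1 / (p : ℝ)) * f (insert v T) := this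
    _ = (1 - (R.card : ℝ) / p) * f T + ∑ v ∈ R, (1 / (p : ℝ)) * f (insert v T) := by
        rw [mul_one_div]
end
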